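/- arXiv:2207.04983 — 7 statements merged into one kernel-verified Lean document; each statement's English description precedes it below -/
import Mathlib

section
/- Let I be a voting instance on an odd number n of agents and proposals p_1, …, p_m lying in the radical one-dimensional domain. If a proposal p_j is safe and 0 is the correct outcome for p_j (i.e., p_j is bad), then every proposal p_k with k ≤ j is safe. -/
/-- A voting instance: each agent has a set of beneficial proposals (`benef`)
and a set of proposals she is uncertain about (`unsure`). -/
structure VotingInstance (A P : Type*) where
  benef : A → P → Bool
  unsure : A → P → Bool

namespace VotingInstance

variable {A P : Type*} [Fintype A] [DecidableEq A]

/-- N⁺(p): agents benefiting from `p`. -/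
def Nplus (I : VotingInstance A P) (p : P) : Finset A :=
  Finset.univ.filter (fun i => I.benef i p = true)

/-- N⁻(p): agents not benefiting from `p`. -/
def Nminus (I : VotingInstance A P) (p : P) : Finset A :=
  Finset.univ.filter (fun i => I.benef i p = false)

/-- N^?(p): agents uncertain about `p`. -/
def Nq (I : VotingInstance A P) (p : P) : Finset A :=
  Finset.univ.filter (fun i => I.unsure i p = true)

/-- N^{+!}(p) = N⁺(p) \ N^?(p). -/
def NplusBang (I : VotingInstance A P) (p : P) : Finset A :=
  I.Nplus p \ I.Nq p

/-- N^{-!}(p) = N⁻(p) \ N^?(p). -/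
def NminusBang (I : VotingInstance A P) (p : P) : Finset A :=
  I.Nminus p \ I.Nq p

/-- `p` is good: at least half of the agents benefit from it. -/
def good (I : VotingInstance A P) (p : P) : Prop :=
  2 * (I.Nplus p).card ≥ Fintype.card A

/-- `p` is bad: at least half of the agents do not benefit from it. -/
def bad (I : VotingInstance A P) (p : P) : Prop :=
  2 * (I.Nminus p).card ≥ Fintype.card A

/-- Outcome 1 (approve) is possible for `p`. -/
def poss1 (I : VotingInstance A P) (p : P) : Prop :=
  2 * (I.Nplus p ∪ I.Nq p).card ≥ Fintype.card A

/-- Outcome 0 (disapprove) is possible for `p`. -/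
def poss0 (I : VotingInstance A P) (p : P) : Prop :=
  2 * (I.Nminus p ∪ I.Nq p).card ≥ Fintype.card A

/-- `p` is safe: every possible outcome for `p` is correct for `p`. -/
def safe (I : VotingInstance A P) (p : P) : Prop :=
  (I.poss1 p → I.good p) ∧ (I.poss0 p → I.bad p)

/-- Educating the agents in `S`: their uncertainty sets become empty. -/
def educate (I : VotingInstance A P) (S : Finset A) : VotingInstance A P where
  benef := I.benef
  unsure := fun i p => !(decide (i ∈ S)) && I.unsure i p

end VotingInstance

/-- In the radical one-dimensional domain with an odd number of agents,
if `p_j` is safe and bad (the correct outcome for `p_j` is 0),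
then every proposal `p_k` with `k ≤ j` is safe. -/
theorem radical1D_safe_bad_leftward {A : Type*} [Fintype A] [DecidableEq A] {m : ℕ}
    (I : VotingInstance A (Fin m))
    (hodd : Odd (Fintype.card A))
    (τ : A → ℕ) (hτ : ∀ i : A, τ i ≤ m)
    (hplus : ∀ (i : A) (ℓ : Fin m), I.benef i ℓ = true ↔ τ i ≤ (ℓ : ℕ))
    (hconv : ∀ (i : A) (ℓ₁ ℓ₂ ℓ₃ : Fin m), ℓ₁ ≤ ℓ₂ → ℓ₂ ≤ ℓ₃ →
      I.unsure i ℓ₁ = true → I.unsure i ℓ₃ = true → I.unsure i ℓ₂ = true)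
    (htouch : ∀ i : A, (∃ ℓ : Fin m, I.unsure i ℓ = true) →
      ∃ ℓ : Fin m, I.unsure i ℓ = true ∧ ((ℓ : ℕ) + 1 = τ i ∨ (ℓ : ℕ) = τ i))
    (j : Fin m) (hsafe : I.safe j) (hbad : I.bad j) :
    ∀ k : Fin m, k ≤ j → I.safe k := by
  classical
  intro k hk
  have hmsub : I.Nminus j ⊆ I.Nminus k := by
    intro i hi
    simp only [VotingInstance.Nminus, Finset.mem_filter, Finset.mem_univ, true_and] at hi ⊢
    cases hbk : I.benef i k with
    | false => rfl
    | true =>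
      have h1 : τ i ≤ (k : ℕ) := (hplus i k).1 hbk
      have h2 : I.benef i j = true := (hplus i j).2 (le_trans h1 hk)
      rw [h2] at hi; exact absurd hi (by simp)
  have hbadk : I.bad k :=
    le_trans hbad (Nat.mul_le_mul_left 2 (Finset.card_le_card hmsub))
  refine ⟨?_, fun _ => hbadk⟩
  intro hposs1
  exfalso
  have hcard : (I.Nplus j).card + (I.Nminus j).card = Fintype.card A := by
    have hm : I.Nminus j = Finset.univ.filter (fun i => ¬ (I.benef i j = true)) := by
      ext i; simp [VotingInstance.Nminus]
    rw [hm, ← Finset.card_univ, VotingInstance.Nplus,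
      Finset.card_filter_add_card_filter_not]
  have hnotgoodj : ¬ I.good j := by
    intro hg
    obtain ⟨c, hc⟩ := hodd
    have hb := hbad
    unfold VotingInstance.bad at hb
    unfold VotingInstance.good at hg
    omega
  have hnp1j : ¬ I.poss1 j := fun h => hnotgoodj (hsafe.1 h)
  have hsub : I.Nplus k ∪ I.Nq k ⊆ I.Nplus j ∪ I.Nq j := by
    intro i hi
    simp only [Finset.mem_union, VotingInstance.Nplus, VotingInstance.Nq,
      Finset.mem_filter, Finset.mem_univ, true_and] at hi ⊢
    rcases hi with hb | hu
    · exact Or.inl ((hplus i j).2 (le_trans ((hplus i k).1 hb) hk))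
    · by_cases hbj : τ i ≤ (j : ℕ)
      · exact Or.inl ((hplus i j).2 hbj)
      · right
        obtain ⟨ℓ, hℓu, hℓt⟩ := htouch i ⟨k, hu⟩
        have hℓj : j ≤ ℓ := by
          have : (j : ℕ) ≤ (ℓ : ℕ) := by omega
          exact this
        exact hconv i k j ℓ hk hℓj hu hℓu
  exact hnp1j (le_trans hposs1 (Nat.mul_le_mul_left 2 (Finset.card_le_card hsub)))
end

section
/- Let I be a voting instance on an odd number n of agents and proposals p_1, …, p_m lying in the radical one-dimensional domain. If a proposal p_j is safe and 1 is the correct outcome for p_j (i.e., p_j is good), then every proposal p_k with k ≥ j is safe. -/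
section Aux
variable {A P : Type*} [Fintype A] [DecidableEq A]

lemma aux_pm_card (I : VotingInstance A P) (p : P) :
    (I.Nplus p).card + (I.Nminus p).card = Fintype.card A := by
  classical
  have h : I.Nminus p = Finset.univ.filter (fun i => ¬ (I.benef i p = true)) := by
    ext i; simp [VotingInstance.Nminus]
  rw [VotingInstance.Nplus, h, Finset.card_filter_add_card_filter_not,
    Finset.card_univ]

lemma aux_bang_card (I : VotingInstance A P) (p : P) :
    (I.NplusBang p).card + (I.Nminus p ∪ I.Nq p).card = Fintype.card A := by
  classical
  have h1 : I.NplusBang p =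
      Finset.univ.filter (fun i => I.benef i p = true ∧ ¬ I.unsure i p = true) := by
    ext i
    simp [VotingInstance.NplusBang, VotingInstance.Nplus, VotingInstance.Nq]
  have h2 : I.Nminus p ∪ I.Nq p =
      Finset.univ.filter (fun i => ¬ (I.benef i p = true ∧ ¬ I.unsure i p = true)) := by
    ext i
    simp only [Finset.mem_union, Finset.mem_filter, Finset.mem_univ, true_and,
      VotingInstance.Nminus, VotingInstance.Nq]
    cases hb : I.benef i p <;> cases hu : I.unsure i p <;> simp
  rw [h1, h2, Finset.card_filter_add_card_filter_not, Finset.card_univ]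

end Aux

/-- In the radical one-dimensional domain with an odd number of agents,
if `p_j` is safe and good (the correct outcome for `p_j` is 1),
then every proposal `p_k` with `k ≥ j` is safe. -/
theorem radical1D_safe_good_rightward {A : Type*} [Fintype A] [DecidableEq A] {m : ℕ}
    (I : VotingInstance A (Fin m))
    (hodd : Odd (Fintype.card A))
    (τ : A → ℕ) (hτ : ∀ i : A, τ i ≤ m)
    (hplus : ∀ (i : A) (ℓ : Fin m), I.benef i ℓ = true ↔ τ i ≤ (ℓ : ℕ))
    (hconv : ∀ (i : A) (ℓ₁ ℓ₂ ℓ₃ : Fin m), ℓ₁ ≤ ℓ₂ → ℓ₂ ≤ ℓ₃ →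
      I.unsure i ℓ₁ = true → I.unsure i ℓ₃ = true → I.unsure i ℓ₂ = true)
    (htouch : ∀ i : A, (∃ ℓ : Fin m, I.unsure i ℓ = true) →
      ∃ ℓ : Fin m, I.unsure i ℓ = true ∧ ((ℓ : ℕ) + 1 = τ i ∨ (ℓ : ℕ) = τ i))
    (j : Fin m) (hsafe : I.safe j) (hgood : I.good j) :
    ∀ k : Fin m, j ≤ k → I.safe k := by
  intro k hk
  classical
  obtain ⟨t, ht⟩ := hodd
  -- p_j is not possibly 0
  have hpm := aux_pm_card I j
  have hnposs0 : ¬ I.poss0 j := by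
    intro h0
    have hbad := hsafe.2 h0
    unfold VotingInstance.good at hgood
    unfold VotingInstance.bad at hbad
    omega
  have hbangj : 2 * (I.NplusBang j).card > Fintype.card A := by
    have := aux_bang_card I j
    unfold VotingInstance.poss0 at hnposs0
    omega
  -- subset
  have hsub : I.NplusBang j ⊆ I.NplusBang k := by
    intro i hi
    simp only [VotingInstance.NplusBang, VotingInstance.Nplus, VotingInstance.Nq,
      Finset.mem_sdiff, Finset.mem_filter, Finset.mem_univ, true_and] at hi ⊢
    obtain ⟨hb, hu⟩ := hi
    have hτj : τ i ≤ (j : ℕ) := (hplus i j).mp hb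
    refine ⟨(hplus i k).mpr (hτj.trans hk), ?_⟩
    intro huk
    obtain ⟨ℓ, hℓ, hℓτ⟩ := htouch i ⟨k, huk⟩
    have hℓj : ℓ ≤ j := by
      rcases hℓτ with h | h <;> (rw [Fin.le_def]; omega)
    exact hu (hconv i ℓ j k hℓj hk hℓ huk)
  have hbangk : 2 * (I.NplusBang k).card > Fintype.card A :=
    lt_of_lt_of_le hbangj (by
      have := Finset.card_le_card hsub
      omega)
  have hbk := aux_bang_card I k
  constructor
  · intro _
    unfold VotingInstance.good
    have hle : (I.NplusBang k).card ≤ (I.Nplus k).card :=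
      Finset.card_le_card (Finset.sdiff_subset)
    omega
  · intro h0
    unfold VotingInstance.poss0 at h0
    omega
end

section
/- Let I be a voting instance on an odd number n of agents and proposals p_1, …, p_m lying in the radical one-dimensional domain. Then the set of indices of unsafe proposals is an interval: if j ≤ ℓ ≤ k and both p_j and p_k are unsafe, then p_ℓ is unsafe. -/
/-- In the radical one-dimensional domain with an odd number of agents,
the set of indices of unsafe proposals is an interval. -/
theorem radical1D_unsafe_interval {A : Type*} [Fintype A] [DecidableEq A] {m : ℕ}
    (I : VotingInstance A (Fin m))
    (hodd : Odd (Fintype.card A))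
    (τ : A → ℕ) (hτ : ∀ i : A, τ i ≤ m)
    (hplus : ∀ (i : A) (ℓ : Fin m), I.benef i ℓ = true ↔ τ i ≤ (ℓ : ℕ))
    (hconv : ∀ (i : A) (ℓ₁ ℓ₂ ℓ₃ : Fin m), ℓ₁ ≤ ℓ₂ → ℓ₂ ≤ ℓ₃ →
      I.unsure i ℓ₁ = true → I.unsure i ℓ₃ = true → I.unsure i ℓ₂ = true)
    (htouch : ∀ i : A, (∃ ℓ : Fin m, I.unsure i ℓ = true) →
      ∃ ℓ : Fin m, I.unsure i ℓ = true ∧ ((ℓ : ℕ) + 1 = τ i ∨ (ℓ : ℕ) = τ i))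
    (j ℓ k : Fin m) (hjl : j ≤ ℓ) (hlk : ℓ ≤ k)
    (hj : ¬ I.safe j) (hk : ¬ I.safe k) :
    ¬ I.safe ℓ := by
  classical
  obtain ⟨t, ht⟩ := hodd
  have memP : ∀ (q : Fin m) (i : A), i ∈ I.Nplus q ↔ τ i ≤ (q : ℕ) := by
    intro q i; simp [VotingInstance.Nplus, hplus]
  have memM : ∀ (q : Fin m) (i : A), i ∈ I.Nminus q ↔ ¬ τ i ≤ (q : ℕ) := by
    intro q i; simp [VotingInstance.Nminus, Bool.eq_false_iff, hplus]
  have memQ : ∀ (q : Fin m) (i : A), i ∈ I.Nq q ↔ I.unsure i q = true := by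
    intro q i; simp [VotingInstance.Nq]
  have hcard : ∀ q : Fin m, (I.Nplus q).card + (I.Nminus q).card = Fintype.card A := by
    intro q
    have hM : I.Nminus q = Finset.univ.filter (fun i => ¬ I.benef i q = true) := by
      ext i
      simp only [VotingInstance.Nminus, Finset.mem_filter, Finset.mem_univ, true_and,
        Bool.not_eq_true]
    rw [VotingInstance.Nplus, hM, Finset.card_filter_add_card_filter_not,
      Finset.card_univ]
  have hgood_mono : ∀ {p q : Fin m}, p ≤ q → I.good p → I.good q := by
    intro p q hpq hg
    have hsub : I.Nplus p ⊆ I.Nplus q := by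
      intro i hi
      rw [memP] at hi ⊢
      exact le_trans hi (Fin.le_def.mp hpq)
    have := Finset.card_le_card hsub
    unfold VotingInstance.good at hg ⊢
    omega
  have hdich : ∀ q : Fin m, ¬ I.good q ↔ I.bad q := by
    intro q
    have h := hcard q
    unfold VotingInstance.good VotingInstance.bad
    omega
  have hnb : ∀ q : Fin m, I.good q → I.bad q → False := by
    intro q hg hb
    exact (hdich q).mpr hb hg
  have extract : ∀ q : Fin m, ¬ I.safe q →
      (I.poss1 q ∧ ¬ I.good q) ∨ (I.poss0 q ∧ ¬ I.bad q) := by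
    intro q hq
    rw [VotingInstance.safe, not_and_or] at hq
    rcases hq with h | h
    · exact Or.inl (_root_.not_imp.mp h)
    · exact Or.inr (_root_.not_imp.mp h)
  by_cases hgl : I.good ℓ
  · -- ℓ is good: show poss0 ℓ, hence unsafe
    have hgk : I.good k := hgood_mono hlk hgl
    have hp0k : I.poss0 k := by
      rcases extract k hk with ⟨_, hng⟩ | ⟨hp, _⟩
      · exact absurd hgk hng
      · exact hp
    have hsub : I.Nminus k ∪ I.Nq k ⊆ I.Nminus ℓ ∪ I.Nq ℓ := by
      intro i hi
      rcases Finset.mem_union.mp hi with hi | hi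
      · refine Finset.mem_union_left _ ?_
        rw [memM] at hi ⊢
        intro h; exact hi (le_trans h (Fin.le_def.mp hlk))
      · rw [memQ] at hi
        by_cases hτ : τ i ≤ (ℓ : ℕ)
        · refine Finset.mem_union_right _ ((memQ ℓ i).mpr ?_)
          obtain ⟨ℓ', hℓ', hc⟩ := htouch i ⟨k, hi⟩
          have h1 : (ℓ' : ℕ) ≤ (ℓ : ℕ) := by omega
          exact hconv i ℓ' ℓ k (Fin.le_def.mpr h1) hlk hℓ' hi
        · exact Finset.mem_union_left _ ((memM ℓ i).mpr hτ)
    have hp0l : I.poss0 ℓ := by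
      have h := Finset.card_le_card hsub
      unfold VotingInstance.poss0 at hp0k ⊢
      omega
    intro hs
    exact hnb ℓ hgl (hs.2 hp0l)
  · -- ℓ is bad: show poss1 ℓ, hence unsafe
    have hbl : I.bad ℓ := (hdich ℓ).mp hgl
    have hngj : ¬ I.good j := fun hg => hgl (hgood_mono hjl hg)
    have hp1j : I.poss1 j := by
      rcases extract j hj with ⟨hp, _⟩ | ⟨_, hnb'⟩
      · exact hp
      · exact absurd ((hdich j).mp hngj) hnb'
    have hsub : I.Nplus j ∪ I.Nq j ⊆ I.Nplus ℓ ∪ I.Nq ℓ := by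
      intro i hi
      rcases Finset.mem_union.mp hi with hi | hi
      · exact Finset.mem_union_left _
          ((memP ℓ i).mpr (le_trans ((memP j i).mp hi) (Fin.le_def.mp hjl)))
      · rw [memQ] at hi
        by_cases hτ : τ i ≤ (ℓ : ℕ)
        · exact Finset.mem_union_left _ ((memP ℓ i).mpr hτ)
        · refine Finset.mem_union_right _ ((memQ ℓ i).mpr ?_)
          obtain ⟨ℓ', hℓ', hc⟩ := htouch i ⟨j, hi⟩
          have h1 : (ℓ : ℕ) ≤ (ℓ' : ℕ) := by omega
          exact hconv i j ℓ ℓ' hjl (Fin.le_def.mpr h1) hi hℓ'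
    have hp1l : I.poss1 ℓ := by
      have h := Finset.card_le_card hsub
      unfold VotingInstance.poss1 at hp1j ⊢
      omega
    intro hs
    exact hnb ℓ (hs.1 hp1l) hbl
end

section
/- Let I be a voting instance on an odd number n of agents. A proposal p is safe if and only if 2·|N^{+!}(p)| > n or 2·|N^{-!}(p)| > n, i.e., if and only if more than half of the agents are certain about p and agree with the correct outcome for p. -/
/-- With an odd number of agents, a proposal `p` is safe if and only if
more than half of the agents are certain about `p` and agree with the correct outcome,
i.e. `2·|N^{+!}(p)| > n` or `2·|N^{-!}(p)| > n`. -/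
theorem safe_iff_certain_majority {A P : Type*} [Fintype A] [DecidableEq A]
    (I : VotingInstance A P) (hodd : Odd (Fintype.card A)) (p : P) :
    I.safe p ↔
      2 * (I.NplusBang p).card > Fintype.card A ∨
      2 * (I.NminusBang p).card > Fintype.card A := by

  classical
  obtain ⟨k, hk⟩ := hodd
  have hsum : (I.Nplus p).card + (I.Nminus p).card = Fintype.card A := by
    have := Finset.card_filter_add_card_filter_not
      (s := (Finset.univ : Finset A)) (p := fun i => I.benef i p = true)
    simpa [VotingInstance.Nplus, VotingInstance.Nminus, Bool.not_eq_true] using this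
  have h1 : I.Nplus p ∪ I.Nq p = (I.NminusBang p)ᶜ := by
    ext i
    simp only [VotingInstance.Nplus, VotingInstance.Nq, VotingInstance.NminusBang,
      VotingInstance.Nminus, Finset.mem_union, Finset.mem_filter, Finset.mem_compl,
      Finset.mem_sdiff, Finset.mem_univ, true_and]
    cases h : I.benef i p <;> cases h' : I.unsure i p <;> simp
  have h0 : I.Nminus p ∪ I.Nq p = (I.NplusBang p)ᶜ := by
    ext i
    simp only [VotingInstance.Nminus, VotingInstance.Nq, VotingInstance.NplusBang,
      VotingInstance.Nplus, Finset.mem_union, Finset.mem_filter, Finset.mem_compl,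
      Finset.mem_sdiff, Finset.mem_univ, true_and]
    cases h : I.benef i p <;> cases h' : I.unsure i p <;> simp
  have hc1 : (I.Nplus p ∪ I.Nq p).card + (I.NminusBang p).card = Fintype.card A := by
    rw [h1]; exact Finset.card_compl_add_card _
  have hc0 : (I.Nminus p ∪ I.Nq p).card + (I.NplusBang p).card = Fintype.card A := by
    rw [h0]; exact Finset.card_compl_add_card _
  have hpb : (I.NplusBang p).card ≤ (I.Nplus p).card :=
    Finset.card_le_card (Finset.sdiff_subset)
  have hmb : (I.NminusBang p).card ≤ (I.Nminus p).card :=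
    Finset.card_le_card (Finset.sdiff_subset)
  unfold VotingInstance.safe VotingInstance.poss1 VotingInstance.poss0
    VotingInstance.good VotingInstance.bad
  constructor
  · rintro ⟨hg, hb⟩
    by_contra hcon
    push_neg at hcon
    obtain ⟨ha, hb'⟩ := hcon
    have hposs1 : 2 * (I.Nplus p ∪ I.Nq p).card ≥ Fintype.card A := by omega
    have hposs0 : 2 * (I.Nminus p ∪ I.Nq p).card ≥ Fintype.card A := by omega
    have := hg hposs1
    have := hb hposs0
    omega
  · rintro (ha | hb)
    · exact ⟨fun _ => by omega, fun h => by omega⟩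
    · exact ⟨fun h => by omega, fun _ => by omega⟩
end

section
/- Let G = (V, E) be a finite simple graph, let I be a voting instance whose proposals p_e are indexed by the edges e ∈ E, and let a : V → N be an injective map from vertices to agents such that for every edge e = {u, v}: N^?(p_e) = {a(u), a(v)}, N^?(p_e) ⊆ N⁺(p_e), and |N⁺(p_e)| = |N⁻(p_e)| + 3. Then, for every κ ∈ ℕ, there exists a set S of at most κ agents such that every proposal is safe in the instance I_S obtained by educating the agents in S, if and only if G admits a vertex cover of size at most κ. -/
/-- A vertex cover of a simple graph: a set of vertices containing at least one
endpoint of every edge. -/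
def SimpleGraph.IsVertexCoverFinset {V : Type*} (G : SimpleGraph V) (C : Finset V) : Prop :=
  ∀ ⦃u v : V⦄, G.Adj u v → u ∈ C ∨ v ∈ C

lemma safe_educate_iff {A P : Type*} [Fintype A] [DecidableEq A]
    (I : VotingInstance A P) (S : Finset A) (p : P) (x y : A) (hxy : x ≠ y)
    (hq : I.Nq p = {x, y}) (hsub : I.Nq p ⊆ I.Nplus p)
    (hcnt : (I.Nplus p).card = (I.Nminus p).card + 3) :
    (I.educate S).safe p ↔ (x ∈ S ∨ y ∈ S) := by
  classical
  have hpart : (I.Nplus p).card + (I.Nminus p).card = Fintype.card A := by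
    have h1 := Finset.card_filter_add_card_filter_not
      (s := (Finset.univ : Finset A)) (p := fun i => I.benef i p = true)
    have h2 : I.Nminus p = Finset.univ.filter (fun i => ¬ (I.benef i p = true)) := by
      ext i; simp [VotingInstance.Nminus]
    rw [VotingInstance.Nplus, h2, Finset.card_univ] at *
    exact h1
  have hNq_ed : (I.educate S).Nq p = I.Nq p \ S := by
    ext i
    simp [VotingInstance.Nq, VotingInstance.educate, Finset.mem_sdiff, and_comm]
  have hNp_ed : (I.educate S).Nplus p = I.Nplus p := rfl
  have hNm_ed : (I.educate S).Nminus p = I.Nminus p := rfl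
  have hgood : (I.educate S).good p := by
    show 2 * ((I.educate S).Nplus p).card ≥ Fintype.card A
    rw [hNp_ed]; omega
  have hnotbad : ¬ (I.educate S).bad p := by
    show ¬ (2 * ((I.educate S).Nminus p).card ≥ Fintype.card A)
    rw [hNm_ed]; omega
  have hdisj : Disjoint (I.Nminus p) (I.Nq p \ S) := by
    rw [Finset.disjoint_left]
    intro i hi hi'
    have h1 : i ∈ I.Nplus p := hsub (Finset.mem_sdiff.mp hi').1
    simp [VotingInstance.Nplus, VotingInstance.Nminus] at hi h1
    simp [h1] at hi
  have hsafe_iff : (I.educate S).safe p ↔ ¬ (I.educate S).poss0 p := by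
    unfold VotingInstance.safe
    constructor
    · rintro ⟨-, h0⟩ hp0
      exact hnotbad (h0 hp0)
    · intro h0
      exact ⟨fun _ => hgood, fun hp0 => absurd hp0 h0⟩
  rw [hsafe_iff]
  have hposs0 : (I.educate S).poss0 p ↔ 2 ≤ (I.Nq p \ S).card := by
    unfold VotingInstance.poss0
    rw [hNm_ed, hNq_ed, Finset.card_union_of_disjoint hdisj]
    omega
  rw [hposs0, hq]
  by_cases hx : x ∈ S
  · simp only [hx, true_or, iff_true]
    intro h2
    have hsub2 : ({x, y} : Finset A) \ S ⊆ {y} := by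
      intro z hz
      rcases Finset.mem_sdiff.mp hz with ⟨hz1, hz2⟩
      rcases Finset.mem_insert.mp hz1 with h | h
      · exact absurd (h ▸ hx) hz2
      · exact h
    have := Finset.card_le_card hsub2
    simp at this; omega
  · by_cases hy : y ∈ S
    · simp only [hy, or_true, iff_true]
      intro h2
      have hsub2 : ({x, y} : Finset A) \ S ⊆ {x} := by
        intro z hz
        rcases Finset.mem_sdiff.mp hz with ⟨hz1, hz2⟩
        rcases Finset.mem_insert.mp hz1 with h | h
        · exact h ▸ Finset.mem_singleton_self x
        · exact absurd ((Finset.mem_singleton.mp h) ▸ hy) hz2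
      have := Finset.card_le_card hsub2
      simp at this; omega
    · simp only [hx, hy, or_self, iff_false, not_not]
      have heq : ({x, y} : Finset A) \ S = {x, y} := by
        apply Finset.sdiff_eq_self_iff_disjoint.mpr
        rw [Finset.disjoint_left]
        intro z hz
        rcases Finset.mem_insert.mp hz with h | h
        · exact h ▸ hx
        · exact (Finset.mem_singleton.mp h) ▸ hy
      rw [heq, Finset.card_insert_of_notMem (by simp [hxy]), Finset.card_singleton]

/-- For a voting instance whose proposals are the edges of a graph `G`, where
for each edge `e = {u,v}` exactly the two agents `a u`, `a v` are uncertain about `p_e`,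
all agents uncertain about `p_e` benefit from it, and `|N⁺(p_e)| = |N⁻(p_e)| + 3`,
educating at most `κ` agents can make all proposals safe if and only if
`G` has a vertex cover of size at most `κ`. -/
theorem educate_all_safe_iff_vertexCover {V A : Type*} [Fintype V] [DecidableEq V]
    [Fintype A] [DecidableEq A]
    (G : SimpleGraph V)
    (I : VotingInstance A G.edgeSet)
    (a : V → A) (ha : Function.Injective a)
    (hq : ∀ (u v : V) (h : G.Adj u v),
      I.Nq ⟨s(u, v), G.mem_edgeSet.mpr h⟩ = {a u, a v})
    (hsub : ∀ p : G.edgeSet, I.Nq p ⊆ I.Nplus p)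
    (hcnt : ∀ p : G.edgeSet, (I.Nplus p).card = (I.Nminus p).card + 3)
    (κ : ℕ) :
    (∃ S : Finset A, S.card ≤ κ ∧ ∀ p : G.edgeSet, (I.educate S).safe p) ↔
    (∃ C : Finset V, C.card ≤ κ ∧ G.IsVertexCoverFinset C) := by
  constructor
  · rintro ⟨S, hcard, hsafe⟩
    refine ⟨Finset.univ.filter (fun v => a v ∈ S), ?_, ?_⟩
    · refine le_trans (Finset.card_le_card_of_injOn a ?_ (fun v _ w _ h => ha h)) hcard
      intro v hv
      exact (Finset.mem_filter.mp hv).2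
    · intro u v huv
      have hne : a u ≠ a v := ha.ne huv.ne
      have := (safe_educate_iff I S ⟨s(u, v), G.mem_edgeSet.mpr huv⟩ (a u) (a v) hne
        (hq u v huv) (hsub _) (hcnt _)).mp (hsafe _)
      rcases this with h | h
      · exact Or.inl (Finset.mem_filter.mpr ⟨Finset.mem_univ _, h⟩)
      · exact Or.inr (Finset.mem_filter.mpr ⟨Finset.mem_univ _, h⟩)
  · rintro ⟨C, hcard, hcov⟩
    refine ⟨C.image a, le_trans Finset.card_image_le hcard, ?_⟩
    rintro ⟨e, he⟩
    revert he
    induction e using Sym2.ind with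
    | _ u v =>
      intro he
      have huv : G.Adj u v := G.mem_edgeSet.mp he
      have hne : a u ≠ a v := ha.ne huv.ne
      refine (safe_educate_iff I (C.image a) ⟨s(u, v), he⟩ (a u) (a v) hne
        ?_ (hsub _) (hcnt _)).mpr ?_
      · exact hq u v huv
      · rcases hcov huv with h | h
        · exact Or.inl (Finset.mem_image_of_mem a h)
        · exact Or.inr (Finset.mem_image_of_mem a h)
end

section
/- Let G be a finite simple graph with vertex set V and edge set E, and let G' be the 3-subdivision of G: the graph on the vertex set V together with two new vertices x_e, y_e for each edge e ∈ E (all new vertices distinct from each other and from V), in which each edge e = {u, v} of G is replaced by the three edges {u, x_e}, {x_e, y_e}, {y_e, v}, and these are all the edges of G'. Then, for every κ ∈ ℕ, G has a vertex cover of size at most κ if and only if G' has a vertex cover of size at most κ + |E|. -/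
/-- The 3-subdivision of `G`: each edge `e`, with chosen ordered endpoints
`(fst e, snd e)`, is replaced by the path `fst e – (e,false) – (e,true) – snd e`. -/
def SimpleGraph.subdivision3 {V : Type*} (G : SimpleGraph V) (fst snd : G.edgeSet → V) :
    SimpleGraph (V ⊕ (G.edgeSet × Bool)) :=
  SimpleGraph.fromRel (fun x y =>
    ∃ e : G.edgeSet,
      (x = Sum.inl (fst e) ∧ y = Sum.inr (e, false)) ∨
      (x = Sum.inr (e, false) ∧ y = Sum.inr (e, true)) ∨
      (x = Sum.inr (e, true) ∧ y = Sum.inl (snd e)))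

/-- `G` has a vertex cover of size at most `κ` if and only if its
3-subdivision has a vertex cover of size at most `κ + |E|`. -/
theorem vertexCover_subdivision3 {V : Type*} [Fintype V] [DecidableEq V]
    (G : SimpleGraph V) [Fintype G.edgeSet]
    (fst snd : G.edgeSet → V)
    (hends : ∀ e : G.edgeSet, (e : Sym2 V) = s(fst e, snd e))
    (κ : ℕ) :
    (∃ C : Finset V, C.card ≤ κ ∧ G.IsVertexCoverFinset C) ↔
    (∃ C' : Finset (V ⊕ (G.edgeSet × Bool)),
      C'.card ≤ κ + Fintype.card G.edgeSet ∧
      (G.subdivision3 fst snd).IsVertexCoverFinset C') := by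
  classical
  have hadj : ∀ e : G.edgeSet, G.Adj (fst e) (snd e) := fun e => by
    rw [← SimpleGraph.mem_edgeSet, ← hends e]; exact e.2
  constructor
  · rintro ⟨C, hcard, hcov⟩
    refine ⟨C.image Sum.inl ∪ Finset.univ.image
        (fun e : G.edgeSet => Sum.inr (e, decide (fst e ∈ C))), ?_, ?_⟩
    · refine le_trans (Finset.card_union_le _ _) (Nat.add_le_add ?_ ?_)
      · exact le_trans (Finset.card_image_le) hcard
      · exact le_trans (Finset.card_image_le) (by simp)
    · intro u v h
      rw [SimpleGraph.subdivision3, SimpleGraph.fromRel_adj] at h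
      obtain ⟨hne, h⟩ := h
      have key : ∀ x y : V ⊕ (G.edgeSet × Bool),
          (∃ e : G.edgeSet,
            (x = Sum.inl (fst e) ∧ y = Sum.inr (e, false)) ∨
            (x = Sum.inr (e, false) ∧ y = Sum.inr (e, true)) ∨
            (x = Sum.inr (e, true) ∧ y = Sum.inl (snd e))) →
          x ∈ C.image Sum.inl ∪ Finset.univ.image
            (fun e : G.edgeSet => Sum.inr (e, decide (fst e ∈ C))) ∨
          y ∈ C.image Sum.inl ∪ Finset.univ.image
            (fun e : G.edgeSet => Sum.inr (e, decide (fst e ∈ C))) := by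
        rintro x y ⟨e, ⟨hx, hy⟩ | ⟨hx, hy⟩ | ⟨hx, hy⟩⟩ <;> subst hx <;> subst hy
        · by_cases hf : fst e ∈ C
          · exact Or.inl (Finset.mem_union_left _ (Finset.mem_image_of_mem _ hf))
          · refine Or.inr (Finset.mem_union_right _ ?_)
            refine Finset.mem_image.mpr ⟨e, Finset.mem_univ _, ?_⟩
            simp [hf]
        · by_cases hf : fst e ∈ C
          · refine Or.inr (Finset.mem_union_right _ ?_)
            exact Finset.mem_image.mpr ⟨e, Finset.mem_univ _, by simp [hf]⟩
          · refine Or.inl (Finset.mem_union_right _ ?_)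
            exact Finset.mem_image.mpr ⟨e, Finset.mem_univ _, by simp [hf]⟩
        · by_cases hf : fst e ∈ C
          · refine Or.inl (Finset.mem_union_right _ ?_)
            exact Finset.mem_image.mpr ⟨e, Finset.mem_univ _, by simp [hf]⟩
          · have hs : snd e ∈ C := by
              rcases hcov (hadj e) with h | h
              · exact absurd h hf
              · exact h
            exact Or.inr (Finset.mem_union_left _ (Finset.mem_image_of_mem _ hs))
      rcases h with h | h
      · exact key u v h
      · exact (key v u h).symm
  · rintro ⟨C', hcard, hcov⟩
    set A : Finset V := Finset.univ.filter (fun v => Sum.inl v ∈ C') with hA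
    set B : Finset G.edgeSet := Finset.univ.filter
      (fun e => Sum.inl (fst e) ∉ C' ∧ Sum.inl (snd e) ∉ C') with hB
    set T : Finset (G.edgeSet × Bool) := Finset.univ.filter
      (fun p => Sum.inr p ∈ C') with hT
    have hmid : ∀ e : G.edgeSet,
        (G.subdivision3 fst snd).Adj (Sum.inr (e, false)) (Sum.inr (e, true)) := by
      intro e
      rw [SimpleGraph.subdivision3, SimpleGraph.fromRel_adj]
      exact ⟨by simp, Or.inl ⟨e, Or.inr (Or.inl ⟨rfl, rfl⟩)⟩⟩
    have hfst : ∀ e : G.edgeSet,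
        (G.subdivision3 fst snd).Adj (Sum.inl (fst e)) (Sum.inr (e, false)) := by
      intro e
      rw [SimpleGraph.subdivision3, SimpleGraph.fromRel_adj]
      exact ⟨by simp, Or.inl ⟨e, Or.inl ⟨rfl, rfl⟩⟩⟩
    have hsnd : ∀ e : G.edgeSet,
        (G.subdivision3 fst snd).Adj (Sum.inr (e, true)) (Sum.inl (snd e)) := by
      intro e
      rw [SimpleGraph.subdivision3, SimpleGraph.fromRel_adj]
      exact ⟨by simp, Or.inl ⟨e, Or.inr (Or.inr ⟨rfl, rfl⟩)⟩⟩
    -- card of T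
    have hTcard : Fintype.card G.edgeSet + B.card ≤ T.card := by
      have hfib := Finset.card_eq_sum_card_fiberwise
        (f := Prod.fst) (s := T) (t := Finset.univ) (fun p _ => Finset.mem_univ _)
      rw [hfib]
      have hpoint : ∀ e ∈ (Finset.univ : Finset G.edgeSet),
          (1 + if e ∈ B then 1 else 0) ≤ (T.filter (fun p => p.1 = e)).card := by
        intro e _
        by_cases heB : e ∈ B
        · have hboth : (e, false) ∈ T ∧ (e, true) ∈ T := by
            rw [hB, Finset.mem_filter] at heB
            obtain ⟨-, h1, h2⟩ := heB
            constructor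
            · rcases hcov (hfst e) with h | h
              · exact absurd h h1
              · simp [hT, h]
            · rcases hcov (hsnd e) with h | h
              · simp [hT, h]
              · exact absurd h h2
          have hsub : ({(e, false), (e, true)} : Finset (G.edgeSet × Bool)) ⊆
              T.filter (fun p => p.1 = e) := by
            intro p hp
            simp only [Finset.mem_insert, Finset.mem_singleton] at hp
            rcases hp with rfl | rfl <;> simp [Finset.mem_filter, hboth.1, hboth.2]
          have := Finset.card_le_card hsub
          simp only [heB, if_pos]
          calc (1 + 1 : ℕ) = ({(e, false), (e, true)} : Finset (G.edgeSet × Bool)).card := by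
                simp
            _ ≤ _ := this
        · simp only [heB, if_neg, not_false_iff, add_zero]
          have hone : ∃ p, p ∈ T.filter (fun p => p.1 = e) := by
            rcases hcov (hmid e) with h | h
            · exact ⟨(e, false), by simp [Finset.mem_filter, hT, h]⟩
            · exact ⟨(e, true), by simp [Finset.mem_filter, hT, h]⟩
          obtain ⟨p, hp⟩ := hone
          exact Finset.card_pos.mpr ⟨p, hp⟩
      calc Fintype.card G.edgeSet + B.card
          = ∑ e : G.edgeSet, (1 + if e ∈ B then 1 else 0) := by
            rw [Finset.sum_add_distrib]
            simp [Finset.card_univ, Finset.sum_ite_mem]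
        _ ≤ _ := Finset.sum_le_sum hpoint
    -- A and T fit disjointly into C'
    have hAT : A.card + T.card ≤ C'.card := by
      have hsub : A.image Sum.inl ∪ T.image Sum.inr ⊆ C' := by
        intro x hx
        rcases Finset.mem_union.mp hx with hx | hx
        · obtain ⟨v, hv, rfl⟩ := Finset.mem_image.mp hx
          exact (Finset.mem_filter.mp hv).2
        · obtain ⟨p, hp, rfl⟩ := Finset.mem_image.mp hx
          exact (Finset.mem_filter.mp hp).2
      have hdisj : Disjoint (A.image Sum.inl) (T.image Sum.inr) := by
        rw [Finset.disjoint_left]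
        rintro x hx hx'
        obtain ⟨v, -, rfl⟩ := Finset.mem_image.mp hx
        obtain ⟨p, -, h⟩ := Finset.mem_image.mp hx'
        exact Sum.inl_ne_inr h.symm
      calc A.card + T.card
          = (A.image Sum.inl).card + (T.image Sum.inr).card := by
            rw [Finset.card_image_of_injective _ Sum.inl_injective,
              Finset.card_image_of_injective _ Sum.inr_injective]
        _ = (A.image Sum.inl ∪ T.image Sum.inr).card :=
            (Finset.card_union_of_disjoint hdisj).symm
        _ ≤ C'.card := Finset.card_le_card hsub
    have hAB : A.card + B.card ≤ κ := by omega
    refine ⟨A ∪ B.image fst, ?_, ?_⟩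
    · exact le_trans (Finset.card_union_le _ _)
        (le_trans (Nat.add_le_add_left Finset.card_image_le _) hAB)
    · intro u v huv
      set e : G.edgeSet := ⟨s(u, v), huv⟩ with he
      have hends' : s(u, v) = s(fst e, snd e) := hends e
      rw [Sym2.eq_iff] at hends'
      by_cases h1 : Sum.inl (fst e) ∈ C'
      · have : fst e ∈ A := Finset.mem_filter.mpr ⟨Finset.mem_univ _, h1⟩
        rcases hends' with ⟨hu, hv⟩ | ⟨hu, hv⟩
        · exact Or.inl (Finset.mem_union_left _ (hu ▸ this))
        · exact Or.inr (Finset.mem_union_left _ (hv ▸ this))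
      · by_cases h2 : Sum.inl (snd e) ∈ C'
        · have : snd e ∈ A := Finset.mem_filter.mpr ⟨Finset.mem_univ _, h2⟩
          rcases hends' with ⟨hu, hv⟩ | ⟨hu, hv⟩
          · exact Or.inr (Finset.mem_union_left _ (hv ▸ this))
          · exact Or.inl (Finset.mem_union_left _ (hu ▸ this))
        · have heB : e ∈ B := Finset.mem_filter.mpr ⟨Finset.mem_univ _, h1, h2⟩
          have : fst e ∈ B.image fst := Finset.mem_image_of_mem _ heB
          rcases hends' with ⟨hu, hv⟩ | ⟨hu, hv⟩
          · exact Or.inl (Finset.mem_union_right _ (hu ▸ this))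
          · exact Or.inr (Finset.mem_union_right _ (hv ▸ this))
end

section
/- Let G be a finite simple graph with vertex set V and edge set E, let G' be the 3-subdivision of G (each edge {u, v} replaced by a path u – x_e – y_e – v through two new vertices), and let G* be the disjoint union of two copies of G'. Then, for every κ ∈ ℕ, G has a vertex cover of size at most κ if and only if G* has a vertex cover of size at most 2·(κ + |E|). -/
/-! Every subdivided edge becomes a path `fst e – x – y – snd e`, so any cover of the
3-subdivision contains `x` or `y`, and contains both when it misses both endpoints. Hence a
cover `C` of `G` extends to a cover of size `|C| + |E|` by one middle vertex per edge, and
conversely a cover `D` of the subdivision yields a cover of `G` of size at most `|D| - |E|`: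
its original vertices, plus one endpoint of every edge whose two middle vertices lie in `D`.
For two disjoint copies, the cheaper half of a cover of size `2m` covers one copy with at
most `m` vertices. -/

open Finset

theorem Finset.fintypeCard_add_card_filter_and_eq_card {α : Type*} [Fintype α] [DecidableEq α]
    {T : Finset (α × Bool)} (hT : ∀ a, (a, false) ∈ T ∨ (a, true) ∈ T) :
    Fintype.card α + #{a | (a, false) ∈ T ∧ (a, true) ∈ T} = #T := by
  set U := T.map ((Equiv.prodComm α Bool).trans (Equiv.boolProdEquivSum α)).toEmbedding
  have hunion : U.toLeft ∪ U.toRight = univ := by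
    ext a; simpa [U] using hT a
  have hinter : U.toLeft ∩ U.toRight = ({a | (a, false) ∈ T ∧ (a, true) ∈ T} : Finset α) := by
    ext a; simp [U]
  rw [← hinter, ← card_univ, ← hunion, card_union_add_card_inter, card_toLeft_add_card_toRight,
    card_map]

namespace SimpleGraph

variable {V W : Type*}

theorem isVertexCoverFinset_sum_iff {G : SimpleGraph V} {H : SimpleGraph W}
    {C : Finset (V ⊕ W)} :
    (G ⊕g H).IsVertexCoverFinset C ↔
      G.IsVertexCoverFinset C.toLeft ∧ H.IsVertexCoverFinset C.toRight := by
  refine ⟨fun hC => ⟨fun u v huv => ?_, fun u v huv => ?_⟩, fun ⟨hL, hR⟩ => ?_⟩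
  · simpa using hC (sum_adj_inl.mpr huv)
  · simpa using hC (sum_adj_inr.mpr huv)
  · rintro (u | u) (v | v) huv
    · simpa using hL (sum_adj_inl.mp huv)
    · simp at huv
    · simp at huv
    · simpa using hR (sum_adj_inr.mp huv)

theorem exists_isVertexCoverFinset_sum_self_iff (G : SimpleGraph V) (m : ℕ) :
    (∃ C : Finset V, #C ≤ m ∧ G.IsVertexCoverFinset C) ↔
      ∃ C : Finset (V ⊕ V), #C ≤ 2 * m ∧ (G ⊕g G).IsVertexCoverFinset C := by
  simp_rw [isVertexCoverFinset_sum_iff]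
  constructor
  · rintro ⟨C, hcard, hC⟩
    exact ⟨C.disjSum C, by rw [card_disjSum]; omega, by simpa using hC⟩
  · rintro ⟨C, hcard, hL, hR⟩
    have := C.card_toLeft_add_card_toRight
    by_cases hle : #C.toLeft ≤ m
    · exact ⟨_, hle, hL⟩
    · exact ⟨_, by omega, hR⟩

theorem isVertexCoverFinset_iff_of_ends {G : SimpleGraph V} {fst snd : G.edgeSet → V}
    (hends : ∀ e : G.edgeSet, (e : Sym2 V) = s(fst e, snd e)) {C : Finset V} :
    G.IsVertexCoverFinset C ↔ ∀ e : G.edgeSet, fst e ∈ C ∨ snd e ∈ C := by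
  refine ⟨fun hC e => hC (by simpa [hends e] using e.2), fun hC u v huv => ?_⟩
  obtain ⟨e, he⟩ : ∃ e : G.edgeSet, (e : Sym2 V) = s(u, v) := ⟨⟨_, huv⟩, rfl⟩
  rw [hends e, Sym2.eq_iff] at he
  rcases he with ⟨rfl, rfl⟩ | ⟨rfl, rfl⟩
  · exact hC e
  · exact (hC e).symm

theorem isVertexCoverFinset_subdivision3_iff {G : SimpleGraph V} {fst snd : G.edgeSet → V}
    {D : Finset (V ⊕ (G.edgeSet × Bool))} :
    (G.subdivision3 fst snd).IsVertexCoverFinset D ↔ ∀ e : G.edgeSet,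
      (fst e ∈ D.toLeft ∨ (e, false) ∈ D.toRight) ∧
      ((e, false) ∈ D.toRight ∨ (e, true) ∈ D.toRight) ∧
      ((e, true) ∈ D.toRight ∨ snd e ∈ D.toLeft) := by
  simp only [mem_toLeft, mem_toRight]
  refine ⟨fun hD e => ⟨hD ?_, hD ?_, hD ?_⟩, ?_⟩
  · exact ⟨by simp, .inl ⟨e, .inl ⟨rfl, rfl⟩⟩⟩
  · exact ⟨by simp, .inl ⟨e, .inr (.inl ⟨rfl, rfl⟩)⟩⟩
  · exact ⟨by simp, .inl ⟨e, .inr (.inr ⟨rfl, rfl⟩)⟩⟩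
  · rintro hD x y ⟨-, ⟨e, h⟩ | ⟨e, h⟩⟩ <;>
      obtain ⟨rfl, rfl⟩ | ⟨rfl, rfl⟩ | ⟨rfl, rfl⟩ := h <;> grind

theorem exists_isVertexCoverFinset_subdivision3_iff [DecidableEq V] {G : SimpleGraph V}
    [Fintype G.edgeSet] {fst snd : G.edgeSet → V}
    (hends : ∀ e : G.edgeSet, (e : Sym2 V) = s(fst e, snd e)) (k : ℕ) :
    (∃ C : Finset V, #C ≤ k ∧ G.IsVertexCoverFinset C) ↔
      ∃ D : Finset (V ⊕ (G.edgeSet × Bool)), #D ≤ k + Fintype.card G.edgeSet ∧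
        (G.subdivision3 fst snd).IsVertexCoverFinset D := by
  simp_rw [isVertexCoverFinset_iff_of_ends hends, isVertexCoverFinset_subdivision3_iff]
  constructor
  · rintro ⟨C, hcard, hC⟩
    -- on each path, take the subdivision vertex not adjacent to the endpoint already in `C`
    refine ⟨C.disjSum (univ.image fun e => (e, decide (fst e ∈ C))), ?_, fun e => ?_⟩
    · grw [card_disjSum, card_image_le, card_univ, hcard]
    · by_cases he : fst e ∈ C
      · simp [he]
      · simp [he, (hC e).resolve_left he]
  · rintro ⟨D, hcard, hD⟩
    set B : Finset G.edgeSet := {e | (e, false) ∈ D.toRight ∧ (e, true) ∈ D.toRight}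
    refine ⟨D.toLeft ∪ B.image fst, ?_, fun e => ?_⟩
    · have hB : Fintype.card G.edgeSet + #B = #D.toRight :=
        fintypeCard_add_card_filter_and_eq_card fun e => (hD e).2.1
      have := D.card_toLeft_add_card_toRight
      grw [card_union_le, card_image_le]
      omega
    · obtain ⟨h₁, -, h₃⟩ := hD e
      by_cases hfst : fst e ∈ D.toLeft
      · simp [hfst]
      by_cases hsnd : snd e ∈ D.toLeft
      · simp [hsnd]
      have heB : e ∈ B :=
        mem_filter.mpr ⟨mem_univ e, h₁.resolve_left hfst, h₃.resolve_right hsnd⟩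
      exact .inl (mem_union_right _ (mem_image_of_mem _ heB))

end SimpleGraph

theorem vertexCover_two_copies_subdivision3_general {V : Type*} [DecidableEq V]
    (G : SimpleGraph V) [Fintype G.edgeSet]
    (fst snd : G.edgeSet → V)
    (hends : ∀ e : G.edgeSet, (e : Sym2 V) = s(fst e, snd e))
    (κ : ℕ) :
    (∃ C : Finset V, C.card ≤ κ ∧ G.IsVertexCoverFinset C) ↔
    (∃ Cstar : Finset ((V ⊕ (G.edgeSet × Bool)) ⊕ (V ⊕ (G.edgeSet × Bool))),
      Cstar.card ≤ 2 * (κ + Fintype.card G.edgeSet) ∧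
      ((G.subdivision3 fst snd) ⊕g (G.subdivision3 fst snd)).IsVertexCoverFinset Cstar) := by
  rw [SimpleGraph.exists_isVertexCoverFinset_subdivision3_iff hends,
    SimpleGraph.exists_isVertexCoverFinset_sum_self_iff]

/-- `G` has a vertex cover of size at most `κ` if and only if the disjoint
union of two copies of the 3-subdivision of `G` has a vertex cover of size at most
`2·(κ + |E|)`. -/
theorem vertexCover_two_copies_subdivision3 {V : Type*} [Fintype V] [DecidableEq V]
    (G : SimpleGraph V) [Fintype G.edgeSet]
    (fst snd : G.edgeSet → V)
    (hends : ∀ e : G.edgeSet, (e : Sym2 V) = s(fst e, snd e))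
    (κ : ℕ) :
    (∃ C : Finset V, C.card ≤ κ ∧ G.IsVertexCoverFinset C) ↔
    (∃ Cstar : Finset ((V ⊕ (G.edgeSet × Bool)) ⊕ (V ⊕ (G.edgeSet × Bool))),
      Cstar.card ≤ 2 * (κ + Fintype.card G.edgeSet) ∧
      ((G.subdivision3 fst snd) ⊕g (G.subdivision3 fst snd)).IsVertexCoverFinset Cstar) :=
  vertexCover_two_copies_subdivision3_general G fst snd hends κ
end
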